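/- arXiv:2112.08699 — 2 statements merged into one kernel-verified Lean document; each statement's English description precedes it below -/
import Mathlib

section
/- Let φ: ℝ → ℝ be continuous and nondecreasing (x ≤ y implies φ(x) ≤ φ(y)), with φ not equal to the identity function. Suppose that for every x ∈ ℝ the limit ψ(x) := lim_{n→∞} φ^[n](x) exists in ℝ and that ψ is differentiable on ℝ. Then there exists a ∈ ℝ such that {x ∈ ℝ : φ(x) = x} = {a}, ψ is the constant function with value a, and the iterates φ^[n] converge to the constant function a uniformly on every compact subset of ℝ. -/
open Filter Topology

/-- If `φ : ℝ → ℝ` is continuous, nondecreasing, not the identity, its iterates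
converge pointwise to a differentiable function `ψ`, then `φ` has a unique fixed
point `a`, `ψ ≡ a`, and the iterates converge to the constant `a` uniformly on
compact sets. -/
theorem iterates_converge_to_unique_fixed_point (φ : ℝ → ℝ)
    (hφc : Continuous φ) (hmono : Monotone φ) (hne : φ ≠ fun x : ℝ => x)
    (ψ : ℝ → ℝ)
    (hlim : ∀ x : ℝ, Tendsto (fun n : ℕ => φ^[n] x) atTop (nhds (ψ x)))
    (hdiff : Differentiable ℝ ψ) :
    ∃ a : ℝ, {x : ℝ | φ x = x} = {a} ∧ (ψ = fun _ : ℝ => a) ∧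
      ∀ K : Set ℝ, IsCompact K →
        TendstoUniformlyOn (fun (n : ℕ) (x : ℝ) => φ^[n] x)
          (fun _ : ℝ => a) atTop K := by
  set F : Set ℝ := {x : ℝ | φ x = x} with hFdef
  have hψc : Continuous ψ := hdiff.continuous
  -- ψ x is always a fixed point
  have hψfix : ∀ x, ψ x ∈ F := by
    intro x
    have h1 : Tendsto (fun n : ℕ => φ^[n + 1] x) atTop (nhds (ψ x)) :=
      (hlim x).comp (tendsto_add_atTop_nat 1)
    have h2 : Tendsto (fun n : ℕ => φ (φ^[n] x)) atTop (nhds (φ (ψ x))) :=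
      (hφc.continuousAt.tendsto).comp (hlim x)
    have heq : (fun n : ℕ => φ^[n + 1] x) = fun n : ℕ => φ (φ^[n] x) := by
      funext n; rw [Function.iterate_succ_apply']
    rw [heq] at h1
    exact tendsto_nhds_unique h2 h1
  -- ψ is the identity on fixed points
  have hψid : ∀ x ∈ F, ψ x = x := by
    intro x hx
    have hit : ∀ n : ℕ, φ^[n] x = x := fun n => Function.iterate_fixed hx n
    have h : Tendsto (fun n : ℕ => φ^[n] x) atTop (nhds x) := by
      simp only [hit]; exact tendsto_const_nhds
    exact tendsto_nhds_unique (hlim x) h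
  -- ψ is monotone
  have hψmono : Monotone ψ := fun x y hxy =>
    le_of_tendsto_of_tendsto' (hlim x) (hlim y) fun n => hmono.iterate n hxy
  -- F is order-connected
  have hconn : ∀ a ∈ F, ∀ b ∈ F, ∀ t, a ≤ t → t ≤ b → t ∈ F := by
    intro a ha b hb t hat htb
    have hab : a ≤ b := le_trans hat htb
    have hivt := intermediate_value_Icc hab hψc.continuousOn
    have ht : t ∈ Set.Icc (ψ a) (ψ b) := by
      rw [hψid a ha, hψid b hb]; exact ⟨hat, htb⟩
    obtain ⟨c, _, hc⟩ := hivt ht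
    rw [← hc]; exact hψfix c
  have hFclosed : IsClosed F := isClosed_eq hφc continuous_id
  have hFne : F.Nonempty := ⟨ψ 0, hψfix 0⟩
  -- derivative contradictions
  have keyUp : ∀ d ∈ F, (∀ x, d ≤ x → ψ x = d) → ∀ b ∈ F, ¬ b < d := by
    intro d hd hconst b hb hbd
    have h1 : derivWithin ψ (Set.Ici d) d = deriv ψ d :=
      (hdiff d).derivWithin ((uniqueDiffOn_Ici d) d Set.self_mem_Ici)
    have h2 : derivWithin ψ (Set.Ici d) d = 0 := by
      have heq : Set.EqOn ψ (fun _ => d) (Set.Ici d) := fun x hx => hconst x hx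
      rw [derivWithin_congr heq (hconst d le_rfl)]
      exact congrFun (derivWithin_fun_const _ _) d
    have hicc : Set.Icc b d ⊆ F := fun t ht => hconn b hb d hd t ht.1 ht.2
    have hEv : ψ =ᶠ[𝓝[Set.Iic d] d] id := by
      filter_upwards [Icc_mem_nhdsLE_of_mem (⟨hbd, le_rfl⟩ : d ∈ Set.Ioc b d)]
        with t ht
      exact hψid t (hicc ht)
    have h3 : derivWithin ψ (Set.Iic d) d = 1 := by
      rw [hEv.derivWithin_eq (hψid d hd)]
      exact derivWithin_id d _ ((uniqueDiffOn_Iic d) d Set.self_mem_Iic)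
    have h4 : derivWithin ψ (Set.Iic d) d = deriv ψ d :=
      (hdiff d).derivWithin ((uniqueDiffOn_Iic d) d Set.self_mem_Iic)
    rw [h1] at h2; rw [h4] at h3
    rw [h2] at h3
    exact zero_ne_one h3
  have keyDown : ∀ a ∈ F, (∀ x, x ≤ a → ψ x = a) → ∀ b ∈ F, ¬ a < b := by
    intro a ha hconst b hb hab
    have h1 : derivWithin ψ (Set.Iic a) a = deriv ψ a :=
      (hdiff a).derivWithin ((uniqueDiffOn_Iic a) a Set.self_mem_Iic)
    have h2 : derivWithin ψ (Set.Iic a) a = 0 := by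
      have heq : Set.EqOn ψ (fun _ => a) (Set.Iic a) := fun x hx => hconst x hx
      rw [derivWithin_congr heq (hconst a le_rfl)]
      exact congrFun (derivWithin_fun_const _ _) a
    have hicc : Set.Icc a b ⊆ F := fun t ht => hconn a ha b hb t ht.1 ht.2
    have hEv : ψ =ᶠ[𝓝[Set.Ici a] a] id := by
      filter_upwards [Icc_mem_nhdsGE_of_mem (⟨le_rfl, hab⟩ : a ∈ Set.Ico a b)]
        with t ht
      exact hψid t (hicc ht)
    have h3 : derivWithin ψ (Set.Ici a) a = 1 := by
      rw [hEv.derivWithin_eq (hψid a ha)]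
      exact derivWithin_id a _ ((uniqueDiffOn_Ici a) a Set.self_mem_Ici)
    have h4 : derivWithin ψ (Set.Ici a) a = deriv ψ a :=
      (hdiff a).derivWithin ((uniqueDiffOn_Ici a) a Set.self_mem_Ici)
    rw [h1] at h2; rw [h4] at h3
    rw [h2] at h3
    exact zero_ne_one h3
  -- F is a singleton
  have hsingle : ∃ a : ℝ, F = {a} := by
    by_cases hba : BddAbove F
    · refine ⟨sSup F, ?_⟩
      have hd : sSup F ∈ F := hFclosed.csSup_mem hFne hba
      have hconst : ∀ x, sSup F ≤ x → ψ x = sSup F := by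
        intro x hx
        have hle : ψ x ≤ sSup F := le_csSup hba (hψfix x)
        have hge : sSup F ≤ ψ x := by
          have := hψmono hx
          rwa [hψid _ hd] at this
        linarith
      ext x
      constructor
      · intro hx
        have hle : x ≤ sSup F := le_csSup hba hx
        rcases lt_or_eq_of_le hle with h | h
        · exact absurd h (keyUp (sSup F) hd hconst x hx)
        · exact h
      · intro hx; rw [Set.mem_singleton_iff] at hx; rw [hx]; exact hd
    · by_cases hbb : BddBelow F
      · refine ⟨sInf F, ?_⟩
        have hd : sInf F ∈ F := hFclosed.csInf_mem hFne hbb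
        have hconst : ∀ x, x ≤ sInf F → ψ x = sInf F := by
          intro x hx
          have hge : sInf F ≤ ψ x := csInf_le hbb (hψfix x)
          have hle : ψ x ≤ sInf F := by
            have := hψmono hx
            rwa [hψid _ hd] at this
          linarith
        ext x
        constructor
        · intro hx
          have hge : sInf F ≤ x := csInf_le hbb hx
          rcases lt_or_eq_of_le hge with h | h
          · exact absurd h (keyDown (sInf F) hd hconst x hx)
          · exact h.symm
        · intro hx; rw [Set.mem_singleton_iff] at hx; rw [hx]; exact hd
      · exfalso
        apply hne
        funext x
        have hx : x ∈ F := by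
          obtain ⟨b, hb, hxb⟩ := not_bddAbove_iff.mp hba x
          obtain ⟨a, ha, hax⟩ := not_bddBelow_iff.mp hbb x
          exact hconn a ha b hb x hax.le hxb.le
        exact hx
  obtain ⟨a, hFa⟩ := hsingle
  have haF : a ∈ F := by rw [hFa]; exact rfl
  have hψa : ψ = fun _ : ℝ => a := by
    funext x
    have := hψfix x
    rw [hFa] at this
    exact this
  refine ⟨a, hFa, hψa, ?_⟩
  intro K hK
  rcases K.eq_empty_or_nonempty with hKe | hKne
  · rw [hKe]; exact tendstoUniformlyOn_empty
  rw [Metric.tendstoUniformlyOn_iff]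
  intro ε hε
  set c := sInf K with hc
  set d := sSup K with hd2
  have hcK : c ∈ K := hK.sInf_mem hKne
  have hdK : d ∈ K := hK.sSup_mem hKne
  have hlimc : Tendsto (fun n : ℕ => φ^[n] c) atTop (nhds a) := by
    have := hlim c; rwa [hψa] at this
  have hlimd : Tendsto (fun n : ℕ => φ^[n] d) atTop (nhds a) := by
    have := hlim d; rwa [hψa] at this
  have h1 : ∀ᶠ n : ℕ in atTop, φ^[n] c ∈ Set.Ioo (a - ε) (a + ε) :=
    hlimc (Ioo_mem_nhds (by linarith) (by linarith))
  have h2 : ∀ᶠ n : ℕ in atTop, φ^[n] d ∈ Set.Ioo (a - ε) (a + ε) :=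
    hlimd (Ioo_mem_nhds (by linarith) (by linarith))
  filter_upwards [h1, h2] with n hn1 hn2
  intro x hx
  have hcx : φ^[n] c ≤ φ^[n] x := hmono.iterate n (csInf_le hK.bddBelow hx)
  have hxd : φ^[n] x ≤ φ^[n] d := hmono.iterate n (le_csSup hK.bddAbove hx)
  rw [Real.dist_eq, abs_lt]
  constructor
  · have := hn2.2; linarith
  · have := hn1.1; linarith
end

section
/- Let h: ℝ → ℝ be the function h(x) = sin(x²). Then h is C^∞, and for every n ∈ ℕ₀ there is no constant C > 0 such that |h^{(2n+2)}(x)| ≤ C(1+x²)^n for all x ∈ ℝ; that is, sup_{x∈ℝ} (1+x²)^{-n} |h^{(2n+2)}(x)| = ∞ for every n ∈ ℕ₀. (In particular, although the functions x ↦ x² and sin both belong to the space O_C(ℝ) of very slowly increasing functions, their composition sin(x²) does not, so the composition operator C_{x²} does not map O_C(ℝ) into itself.) -/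
open Polynomial

lemma sin_sq_iteratedDeriv (k : ℕ) : ∃ p q : Polynomial ℝ,
    p.natDegree ≤ k ∧ q.natDegree ≤ k ∧
    p.coeff k = ((2*Complex.I)^k).re ∧ q.coeff k = ((2*Complex.I)^k).im ∧
    ∀ x : ℝ, iteratedDeriv k (fun x : ℝ => Real.sin (x^2)) x
      = p.eval x * Real.sin (x^2) + q.eval x * Real.cos (x^2) := by
  induction k with
  | zero =>
    refine ⟨1, 0, by simp, by simp, by simp, by simp, fun x => by simp⟩
  | succ k ih =>
    obtain ⟨p, q, hp, hq, hpc, hqc, hf⟩ := ih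
    refine ⟨derivative p - C 2 * X * q, derivative q + C 2 * X * p, ?_, ?_, ?_, ?_, ?_⟩
    · refine (natDegree_sub_le _ _).trans (max_le ?_ ?_)
      · have := natDegree_derivative_le p; omega
      · refine (natDegree_mul_le).trans ?_
        have : (C (2:ℝ) * X).natDegree ≤ 1 := (natDegree_C_mul_le _ _).trans natDegree_X_le
        omega
    · refine (natDegree_add_le _ _).trans (max_le ?_ ?_)
      · have := natDegree_derivative_le q; omega
      · refine (natDegree_mul_le).trans ?_
        have : (C (2:ℝ) * X).natDegree ≤ 1 := (natDegree_C_mul_le _ _).trans natDegree_X_le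
        omega
    · have h1 : (derivative p).coeff (k+1) = 0 := by
        rw [coeff_derivative]
        rw [coeff_eq_zero_of_natDegree_lt (by omega)]
        ring
      have h2 : (C (2:ℝ) * X * q).coeff (k+1) = 2 * q.coeff k := by
        rw [mul_assoc, coeff_C_mul, coeff_X_mul]
      rw [coeff_sub, h1, h2, hqc, pow_succ, zero_sub]
      simp [Complex.mul_re]
      ring
    · have h1 : (derivative q).coeff (k+1) = 0 := by
        rw [coeff_derivative]
        rw [coeff_eq_zero_of_natDegree_lt (by omega)]
        ring
      have h2 : (C (2:ℝ) * X * p).coeff (k+1) = 2 * p.coeff k := by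
        rw [mul_assoc, coeff_C_mul, coeff_X_mul]
      rw [coeff_add, h1, h2, hpc, pow_succ, zero_add]
      simp [Complex.mul_im]
      ring
    · intro x
      rw [iteratedDeriv_succ]
      have hfun : iteratedDeriv k (fun x : ℝ => Real.sin (x^2))
          = fun x => p.eval x * Real.sin (x^2) + q.eval x * Real.cos (x^2) := funext hf
      rw [hfun]
      have h3 : HasDerivAt (fun x : ℝ => x^2) (2*x) x := by simpa using hasDerivAt_pow 2 x
      have hs : HasDerivAt (fun x : ℝ => Real.sin (x^2)) (Real.cos (x^2) * (2*x)) x := by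
        exact (Real.hasDerivAt_sin (x^2)).comp x h3
      have hc : HasDerivAt (fun x : ℝ => Real.cos (x^2)) (-Real.sin (x^2) * (2*x)) x := by
        exact (Real.hasDerivAt_cos (x^2)).comp x h3
      have hd : HasDerivAt (fun x => p.eval x * Real.sin (x^2) + q.eval x * Real.cos (x^2)) _ x :=
        (((p.hasDerivAt x).mul hs).add ((q.hasDerivAt x).mul hc))
      rw [hd.deriv]
      simp only [eval_sub, eval_add, eval_mul, eval_C, eval_X, eval_pow]
      ring

lemma poly_eval_lower_bound (p : Polynomial ℝ) (d : ℕ) (hd : p.natDegree ≤ d)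
    (hd1 : 1 ≤ d) {x : ℝ} (hx : 1 ≤ x) :
    |p.coeff d| * x^d - (∑ i ∈ Finset.range d, |p.coeff i|) * x^(d-1) ≤ |p.eval x| := by
  have hx0 : (0:ℝ) ≤ x := by linarith
  have he : p.eval x = ∑ i ∈ Finset.range (d+1), p.coeff i * x^i :=
    eval_eq_sum_range' (Nat.lt_succ_of_le hd) x
  rw [Finset.sum_range_succ] at he
  set T := ∑ i ∈ Finset.range d, p.coeff i * x^i with hT
  have hTb : |T| ≤ (∑ i ∈ Finset.range d, |p.coeff i|) * x^(d-1) := by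
    calc |T| ≤ ∑ i ∈ Finset.range d, |p.coeff i * x^i| := Finset.abs_sum_le_sum_abs _ _
      _ ≤ ∑ i ∈ Finset.range d, |p.coeff i| * x^(d-1) := by
          refine Finset.sum_le_sum fun i hi => ?_
          rw [abs_mul, abs_pow, abs_of_nonneg hx0]
          exact mul_le_mul_of_nonneg_left
            (pow_le_pow_right₀ hx (by have := Finset.mem_range.mp hi; omega)) (abs_nonneg _)
      _ = _ := by rw [Finset.sum_mul]
  have h1 : |p.coeff d * x^d| ≤ |p.eval x| + |T| := by
    have : p.coeff d * x^d = p.eval x - T := by rw [he]; ring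
    rw [this]
    exact abs_sub _ _
  rw [abs_mul, abs_pow, abs_of_nonneg hx0] at h1
  linarith



/-- The function `h(x) = sin(x²)` is `C^∞`, but for every `n` its derivative of
order `2n+2` admits no bound of the form `C(1+x²)^n`; in particular `sin(x²)`
does not belong to the space `O_C(ℝ)` of very slowly increasing functions,
although `x ↦ x²` and `sin` do. -/
theorem sin_sq_not_very_slowly_increasing :
    ContDiff ℝ (⊤ : ℕ∞) (fun x : ℝ => Real.sin (x ^ 2)) ∧
      ∀ n : ℕ, ¬ ∃ C > (0 : ℝ), ∀ x : ℝ,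
        |iteratedDeriv (2 * n + 2) (fun x : ℝ => Real.sin (x ^ 2)) x| ≤
          C * (1 + x ^ 2) ^ n := by
  constructor
  · exact Real.contDiff_sin.comp (contDiff_id.pow 2)
  · rintro n ⟨C, hC, hb⟩
    obtain ⟨p, q, hp, hq, hpc, hqc, hf⟩ := sin_sq_iteratedDeriv (2*n+2)
    -- top coefficient
    have hcoef : p.coeff (2*n+2) = (-4:ℝ)^(n+1) := by
      rw [hpc, show 2*n+2 = 2*(n+1) by ring, pow_mul]
      have : (2*Complex.I)^2 = ((-4:ℝ):ℂ) := by
        rw [mul_pow, Complex.I_sq]; norm_num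
      rw [this, ← Complex.ofReal_pow, Complex.ofReal_re]
    set M : ℝ := ∑ i ∈ Finset.range (2*n+2), |p.coeff i| with hM
    have hM0 : 0 ≤ M := Finset.sum_nonneg fun i _ => abs_nonneg _
    set B : ℝ := max 1 ((M + C * 2^n) / 4^(n+1)) with hB
    have hB1 : (1:ℝ) ≤ B := le_max_left _ _
    set j : ℕ := ⌈B^2⌉₊ with hj
    set x : ℝ := Real.sqrt (Real.pi/2 + 2*Real.pi*j) with hxdef
    have hpos : (0:ℝ) < Real.pi/2 + 2*Real.pi*j := by
      have := Real.pi_pos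
      positivity
    have hx2 : x^2 = Real.pi/2 + 2*Real.pi*j := Real.sq_sqrt hpos.le
    have hxB : B < x := by
      have h1 : B^2 < x^2 := by
        rw [hx2]
        have h2 : (B^2 : ℝ) ≤ j := Nat.le_ceil _
        have h3 : (j:ℝ) ≤ 2*Real.pi*j := by
          nlinarith [Real.pi_gt_three, Nat.cast_nonneg (α := ℝ) j]
        nlinarith [Real.pi_pos]
      by_contra h
      push_neg at h
      have hx0 : (0:ℝ) ≤ x := Real.sqrt_nonneg _
      nlinarith
    have hx1 : (1:ℝ) ≤ x := le_of_lt (lt_of_le_of_lt hB1 hxB)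
    -- sin/cos values
    have hsin : Real.sin (x^2) = 1 := by
      rw [hx2, show Real.pi/2 + 2*Real.pi*(j:ℝ) = Real.pi/2 + (j:ℤ)*(2*Real.pi) by
        push_cast; ring, Real.sin_add_int_mul_two_pi, Real.sin_pi_div_two]
    have hcos : Real.cos (x^2) = 0 := by
      rw [hx2, show Real.pi/2 + 2*Real.pi*(j:ℝ) = Real.pi/2 + (j:ℤ)*(2*Real.pi) by
        push_cast; ring, Real.cos_add_int_mul_two_pi, Real.cos_pi_div_two]
    -- derivative value
    have hval : iteratedDeriv (2*n+2) (fun x : ℝ => Real.sin (x^2)) x = p.eval x := by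
      rw [hf x, hsin, hcos]; ring
    -- lower bound
    have hlow := poly_eval_lower_bound p (2*n+2) hp (by omega) hx1
    rw [hcoef] at hlow
    have habs : |(-4:ℝ)^(n+1)| = 4^(n+1) := by
      rw [abs_pow]; norm_num
    rw [habs] at hlow
    -- upper bound from hypothesis
    have hub := hb x
    rw [hval] at hub
    have hx2ge : (1:ℝ) ≤ x^2 := by nlinarith
    have hup2 : C * (1 + x^2)^n ≤ C * 2^n * x^(2*n) := by
      have : (1 + x^2)^n ≤ (2*x^2)^n := by
        apply pow_le_pow_left₀ (by positivity)
        linarith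
      calc C * (1+x^2)^n ≤ C * (2*x^2)^n := mul_le_mul_of_nonneg_left this hC.le
        _ = C * 2^n * x^(2*n) := by rw [mul_pow, ← pow_mul]; ring
    -- combine
    have hxpow : (0:ℝ) < x^(2*n+1) := by positivity
    have hstep : x^(2*n) ≤ x^(2*n+1) := pow_le_pow_right₀ hx1 (by omega)
    have hmid : 4^(n+1) * x^(2*n+2) - M * x^(2*n+1) ≤ C * 2^n * x^(2*n) := by
      calc 4^(n+1) * x^(2*n+2) - M * x^(2*n+1)
          ≤ |p.eval x| := by
            have h5 : (2*n+2) - 1 = 2*n+1 := by omega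
            rw [h5] at hlow; linarith
        _ ≤ C * (1+x^2)^n := hub
        _ ≤ C * 2^n * x^(2*n) := hup2
    have h2 : C * 2^n * x^(2*n) ≤ C * 2^n * x^(2*n+1) :=
      mul_le_mul_of_nonneg_left hstep (by positivity)
    have hfin : 4^(n+1) * x ≤ M + C * 2^n := by
      have h3 : (4^(n+1)*x) * x^(2*n+1) ≤ (M + C*2^n) * x^(2*n+1) := by
        have e1 : (4^(n+1)*x) * x^(2*n+1) = 4^(n+1) * x^(2*n+2) := by ring
        have e2 : (M + C*2^n) * x^(2*n+1) = M*x^(2*n+1) + C*2^n*x^(2*n+1) := by ring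
        rw [e1, e2]; linarith
      exact le_of_mul_le_mul_right h3 hxpow
    have h4pos : (0:ℝ) < 4^(n+1) := by positivity
    have hxle : x ≤ (M + C * 2^n) / 4^(n+1) := by
      rw [le_div_iff₀ h4pos]; linarith
    have : x ≤ B := hxle.trans (le_max_right _ _)
    linarith
end
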